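/- arXiv:2401.10052 — 7 statements merged into one kernel-verified Lean document; each statement's English description precedes it below -/
import Mathlib

section
/- Let P ≻ 0, F an n×n matrix, G an n×1 matrix with GᵀPG > 0, and K a 1×n matrix. If P - (F - GK)ᵀP(F - GK) ≻ 0, then P - FᵀPF + FᵀPG(GᵀPG)⁻¹GᵀPF ≻ 0. -/
/-!
Completing the square around the optimal gain `K* = (GᵀPG)⁻¹GᵀPF` gives
`P - FᵀPF + FᵀPG(GᵀPG)⁻¹GᵀPF = P - (F - GK)ᵀP(F - GK) + (K - K*)ᵀ(GᵀPG)(K - K*)`,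
a positive definite matrix plus a positive semidefinite one. For a single input,
`GᵀPG` is the `1 × 1` matrix `q • 1`.
-/

open Matrix

namespace Matrix

variable {n m R : Type*} [Fintype n] [Fintype m] [DecidableEq m]

noncomputable def optimalGain [CommRing R] (P F : Matrix n n R) (G : Matrix n m R) :
    Matrix m n R :=
  (Gᵀ * P * G)⁻¹ * (Gᵀ * P * F)

theorem riccati_eq_closedLoop_add [CommRing R] {P F : Matrix n n R} {G : Matrix n m R}
    (K : Matrix m n R) (hP : P.IsSymm) (hS : IsUnit (Gᵀ * P * G)) :
    P - Fᵀ * P * F + Fᵀ * P * G * (Gᵀ * P * G)⁻¹ * (Gᵀ * P * F)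
      = P - (F - G * K)ᵀ * P * (F - G * K)
        + (K - optimalGain P F G)ᵀ * (Gᵀ * P * G) * (K - optimalGain P F G) := by
  set S := Gᵀ * P * G
  have hdet : IsUnit S.det := (isUnit_iff_isUnit_det S).mp hS
  have hK : optimalGain P F G = S⁻¹ * (Gᵀ * P * F) := rfl
  have hSt : Sᵀ = S := by simp [S, hP.eq, Matrix.mul_assoc]
  have hHt : (K - optimalGain P F G)ᵀ = Kᵀ - Fᵀ * P * G * S⁻¹ := by
    simp [hK, transpose_nonsing_inv, hSt, hP.eq, Matrix.mul_assoc]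
  have hdeviation : (K - optimalGain P F G)ᵀ * S * (K - optimalGain P F G)
      = Kᵀ * S * K - Kᵀ * (Gᵀ * P * F) - Fᵀ * P * G * K + Fᵀ * P * G * S⁻¹ * (Gᵀ * P * F) := by
    rw [hHt]
    simp only [hK, Matrix.sub_mul, Matrix.mul_sub, Matrix.mul_assoc,
      mul_nonsing_inv_cancel_left _ _ hdet, nonsing_inv_mul_cancel_left _ _ hdet]
    abel
  have hclosedLoop : (F - G * K)ᵀ * P * (F - G * K)
      = Fᵀ * P * F - Fᵀ * P * G * K - Kᵀ * (Gᵀ * P * F) + Kᵀ * S * K := by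
    simp only [S, transpose_sub, transpose_mul, Matrix.sub_mul, Matrix.mul_sub, Matrix.mul_assoc]
    abel
  rw [hdeviation, hclosedLoop]
  abel

theorem posDef_riccati_of_posDef_closedLoop {P F : Matrix n n ℝ} {G : Matrix n m ℝ}
    (K : Matrix m n ℝ) (hP : P.IsSymm) (hS : (Gᵀ * P * G).PosDef)
    (hLyap : (P - (F - G * K)ᵀ * P * (F - G * K)).PosDef) :
    (P - Fᵀ * P * F + Fᵀ * P * G * (Gᵀ * P * G)⁻¹ * (Gᵀ * P * F)).PosDef := by
  rw [riccati_eq_closedLoop_add K hP hS.isUnit]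
  refine hLyap.add_posSemidef ?_
  simpa using hS.posSemidef.conjTranspose_mul_mul_same (K - optimalGain P F G)

end Matrix

theorem stmt4 {n : ℕ}
    (P F : Matrix (Fin n) (Fin n) ℝ) (G : Matrix (Fin n) (Fin 1) ℝ)
    (K : Matrix (Fin 1) (Fin n) ℝ)
    (hP : P.PosDef) (q : ℝ) (hq : q = (Gᵀ * P * G) 0 0) (hqpos : 0 < q)
    (hLyap : (P - (F - G * K)ᵀ * P * (F - G * K)).PosDef) :
    (P - Fᵀ * P * F + q⁻¹ • (Fᵀ * P * G * (Gᵀ * P * F))).PosDef := by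
  have hS : Gᵀ * P * G = q • 1 := by
    ext i j
    fin_cases i; fin_cases j
    simp [hq]
  have hSinv : (Gᵀ * P * G)⁻¹ = q⁻¹ • 1 := by
    rw [hS]
    exact inv_eq_left_inv (by simp [smul_smul, hqpos.ne'])
  have key := posDef_riccati_of_posDef_closedLoop K (isHermitian_iff_isSymm.mp hP.isHermitian)
    (hS ▸ PosDef.one.smul hqpos) hLyap
  rw [hSinv] at key
  simpa only [Matrix.mul_smul, Matrix.smul_mul, Matrix.mul_one, Matrix.mul_assoc] using key
end

section
/- Let P ≻ 0, F n×n, G n×1 with q := GᵀPG > 0, and suppose W := P - FᵀPF + FᵀPG q⁻¹ GᵀPF ≻ 0. Factor W = X_Wᵀ X_W with X_W invertible and q = x_Q² with x_Q > 0. For a 1×n matrix K with H := K - q⁻¹GᵀPF, the inequality P - (F - GK)ᵀP(F - GK) ≻ 0 holds if and only if M := x_Q · H · X_W⁻¹ satisfies MᵀM ≺ I. -/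
/-!
Completing the square in the gain gives
`P - (F - GK)ᵀ P (F - GK) = W - q HᵀH`, and substituting `W = X_Wᵀ X_W`, `q = x_Q²` turns the
right side into the congruence `X_Wᵀ (I - MᵀM) X_W`. Congruence by the invertible `X_W`
preserves positive definiteness.
-/

open Matrix

namespace Matrix

section

variable {m n K : Type*} [Fintype m] [DecidableEq m] [Field K]

theorem transpose_sub_inv_mul_mul_mul_sub_inv_mul {Q : Matrix m m K} (hQ : Qᵀ = Q)
    (hQdet : IsUnit Q.det) (L B : Matrix m n K) :
    (L - Q⁻¹ * B)ᵀ * Q * (L - Q⁻¹ * B) = Lᵀ * Q * L - Bᵀ * L - Lᵀ * B + Bᵀ * Q⁻¹ * B := by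
  have hQinv : Q⁻¹ᵀ = Q⁻¹ := by rw [transpose_nonsing_inv, hQ]
  simp only [transpose_sub, transpose_mul, hQinv, Matrix.sub_mul, Matrix.mul_sub,
    Matrix.mul_assoc, mul_nonsing_inv_cancel_left _ _ hQdet, nonsing_inv_mul_cancel_left _ _ hQdet]
  abel

theorem sub_transpose_mul_mul_sub_eq_completeSquare [Fintype n] {P A : Matrix n n K}
    {G : Matrix n m K} (hP : Pᵀ = P) (hQ : IsUnit (Gᵀ * P * G).det) (L : Matrix m n K) :
    P - (A - G * L)ᵀ * P * (A - G * L) =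
      P - Aᵀ * P * A + Aᵀ * P * G * (Gᵀ * P * G)⁻¹ * (Gᵀ * P * A)
        - (L - (Gᵀ * P * G)⁻¹ * (Gᵀ * P * A))ᵀ * (Gᵀ * P * G) *
            (L - (Gᵀ * P * G)⁻¹ * (Gᵀ * P * A)) := by
  have hQsymm : (Gᵀ * P * G)ᵀ = Gᵀ * P * G := by simp [hP, Matrix.mul_assoc]
  have hBT : (Gᵀ * P * A)ᵀ = Aᵀ * P * G := by simp [hP, Matrix.mul_assoc]
  rw [transpose_sub_inv_mul_mul_mul_sub_inv_mul hQsymm hQ, hBT]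
  simp only [transpose_sub, transpose_mul, Matrix.sub_mul, Matrix.mul_sub, Matrix.mul_assoc]
  abel

end

section

variable {m n R : Type*} [Fintype m] [Fintype n] [DecidableEq n] [CommRing R]

theorem transpose_mul_one_sub_mul_mul_eq {X : Matrix n n R} (hX : IsUnit X) (c : R)
    (H : Matrix m n R) :
    Xᵀ * (1 - (c • (H * X⁻¹))ᵀ * (c • (H * X⁻¹))) * X = Xᵀ * X - c ^ 2 • (Hᵀ * H) := by
  have hXdet : IsUnit X.det := (isUnit_iff_isUnit_det X).mp hX
  have hXTdet : IsUnit Xᵀ.det := by rwa [det_transpose]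
  simp only [transpose_smul, transpose_mul, transpose_nonsing_inv, Matrix.smul_mul,
    Matrix.mul_smul, smul_smul, Matrix.mul_sub, Matrix.sub_mul, Matrix.mul_one, Matrix.mul_assoc,
    nonsing_inv_mul _ hXdet, mul_nonsing_inv_cancel_left _ _ hXTdet, pow_two]

end

end Matrix

theorem stmt5_general {n : ℕ}
    (P F : Matrix (Fin n) (Fin n) ℝ) (G : Matrix (Fin n) (Fin 1) ℝ)
    (K : Matrix (Fin 1) (Fin n) ℝ)
    (hP : P.PosDef) (q : ℝ) (hq : q = (Gᵀ * P * G) 0 0) (hqpos : 0 < q)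
    (W : Matrix (Fin n) (Fin n) ℝ)
    (hW : W = P - Fᵀ * P * F + q⁻¹ • (Fᵀ * P * G * (Gᵀ * P * F)))
    (XW : Matrix (Fin n) (Fin n) ℝ) (hXW : IsUnit XW) (hWfac : W = XWᵀ * XW)
    (xQ : ℝ) (hxQsq : q = xQ ^ 2)
    (H : Matrix (Fin 1) (Fin n) ℝ) (hH : H = K - q⁻¹ • (Gᵀ * P * F))
    (M : Matrix (Fin 1) (Fin n) ℝ) (hM : M = xQ • (H * XW⁻¹)) :
    (P - (F - G * K)ᵀ * P * (F - G * K)).PosDef ↔ (1 - Mᵀ * M).PosDef := by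
  have hQ : Gᵀ * P * G = q • 1 := by
    ext i j
    fin_cases i; fin_cases j
    simp [hq]
  have hQinv : (q • 1 : Matrix (Fin 1) (Fin 1) ℝ)⁻¹ = q⁻¹ • 1 :=
    inv_eq_left_inv (by simp [smul_smul, hqpos.ne'])
  have hQdet : IsUnit (Gᵀ * P * G).det := by simp [hQ, hqpos.ne']
  have hsquare : P - (F - G * K)ᵀ * P * (F - G * K) = W - q • (Hᵀ * H) := by
    have hPsymm : Pᵀ = P := by simpa using hP.isHermitian.eq
    rw [sub_transpose_mul_mul_sub_eq_completeSquare hPsymm hQdet, hQ, hQinv, hW, hH]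
    simp only [Matrix.mul_smul, Matrix.smul_mul, Matrix.mul_one, Matrix.one_mul, Matrix.mul_assoc]
  have hfactor : W - q • (Hᵀ * H) = XWᵀ * (1 - Mᵀ * M) * XW := by
    rw [hM, transpose_mul_one_sub_mul_mul_eq hXW, hWfac, hxQsq]
  rw [hsquare, hfactor, ← conjTranspose_eq_transpose_of_trivial, ← star_eq_conjTranspose]
  exact IsUnit.posDef_star_left_conjugate_iff hXW

theorem stmt5 {n : ℕ}
    (P F : Matrix (Fin n) (Fin n) ℝ) (G : Matrix (Fin n) (Fin 1) ℝ)
    (K : Matrix (Fin 1) (Fin n) ℝ)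
    (hP : P.PosDef) (q : ℝ) (hq : q = (Gᵀ * P * G) 0 0) (hqpos : 0 < q)
    (W : Matrix (Fin n) (Fin n) ℝ)
    (hW : W = P - Fᵀ * P * F + q⁻¹ • (Fᵀ * P * G * (Gᵀ * P * F)))
    (hWpd : W.PosDef)
    (XW : Matrix (Fin n) (Fin n) ℝ) (hXW : IsUnit XW) (hWfac : W = XWᵀ * XW)
    (xQ : ℝ) (hxQ : 0 < xQ) (hxQsq : q = xQ ^ 2)
    (H : Matrix (Fin 1) (Fin n) ℝ) (hH : H = K - q⁻¹ • (Gᵀ * P * F))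
    (M : Matrix (Fin 1) (Fin n) ℝ) (hM : M = xQ • (H * XW⁻¹)) :
    (P - (F - G * K)ᵀ * P * (F - G * K)).PosDef ↔ (1 - Mᵀ * M).PosDef :=
  stmt5_general P F G K hP q hq hqpos W hW XW hXW hWfac xQ hxQsq H hH M hM
end

section
/- Let X, Z be real matrices with X m×m invertible and Z (n−m)×m, and set N = XᵀX + ZᵀZ (so N is symmetric positive definite m×m). Define M as the n×m block matrix with top block (I − N)(I + N)⁻¹ and bottom block −2Z(I + N)⁻¹. Then MᵀM ≺ I. -/
/-!
Put `A = (1 + N)⁻¹`. Since `N` is symmetric, `1 = Aᵀ (1 + N)ᵀ (1 + N) A` and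
`Mᵀ M = Aᵀ ((1 - N)ᵀ (1 - N) + 4 Zᵀ Z) A`; as `(1 + N)ᵀ (1 + N) - (1 - N)ᵀ (1 - N) = 4 N`,
this gives `1 - Mᵀ M = Aᵀ (4 (N - Zᵀ Z)) A = Aᵀ (4 Xᵀ X) A`, the congruence of a positive
definite matrix by an invertible one.
-/

open Matrix

namespace Matrix

variable {R : Type*} [CommRing R] {m p : Type*} [Fintype m] [DecidableEq m] [Fintype p]

lemma one_sub_transpose_mul_self_cayley {N A : Matrix m m R} (Z : Matrix p m R)
    (hN : Nᵀ = N) (hA : (1 + N) * A = 1) :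
    1 - (fromRows ((1 - N) * A) (-(2 : R) • (Z * A)))ᵀ *
        fromRows ((1 - N) * A) (-(2 : R) • (Z * A)) =
      Aᵀ * ((4 : R) • (N - Zᵀ * Z)) * A := by
  have hone : (1 : Matrix m m R) = ((1 + N) * A)ᵀ * ((1 + N) * A) := by simp [hA]
  rw [transpose_fromRows, fromCols_mul_fromRows]
  nth_rw 1 [hone]
  simp only [transpose_mul, transpose_add, transpose_sub, transpose_smul, hN,
    Matrix.mul_add, Matrix.add_mul, Matrix.mul_sub, Matrix.sub_mul, Matrix.mul_smul,
    Matrix.smul_mul, Matrix.one_mul, Matrix.mul_assoc]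
  module

end Matrix

theorem stmt8 {m p : ℕ}
    (X : Matrix (Fin m) (Fin m) ℝ) (Z : Matrix (Fin p) (Fin m) ℝ)
    (hX : IsUnit X)
    (N : Matrix (Fin m) (Fin m) ℝ) (hN : N = Xᵀ * X + Zᵀ * Z)
    (M : Matrix (Fin m ⊕ Fin p) (Fin m) ℝ)
    (hM : M = Matrix.fromRows ((1 - N) * (1 + N)⁻¹) (-(2 : ℝ) • (Z * (1 + N)⁻¹))) :
    (1 - Mᵀ * M).PosDef := by
  have hNsymm : Nᵀ = N := by simp [hN]
  have hNpsd : N.PosSemidef := by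
    simpa [hN] using
      (posSemidef_conjTranspose_mul_self X).add (posSemidef_conjTranspose_mul_self Z)
  have hunit : IsUnit (1 + N) := (PosDef.one.add_posSemidef hNpsd).isUnit
  have hinv : (1 + N) * (1 + N)⁻¹ = 1 :=
    mul_nonsing_inv _ ((isUnit_iff_isUnit_det _).mp hunit)
  have hdiff : N - Zᵀ * Z = Xᵀ * X := by rw [hN, add_sub_cancel_right]
  have hXX : (Xᵀ * X).PosDef := by
    simpa using PosDef.conjTranspose_mul_self X (mulVec_injective_of_isUnit hX)
  rw [hM, one_sub_transpose_mul_self_cayley Z hNsymm hinv, hdiff,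
    ← conjTranspose_eq_transpose_of_trivial]
  exact (hXX.smul four_pos).conjTranspose_mul_mul_same
    (mulVec_injective_of_isUnit (isUnit_nonsing_inv_iff.mpr hunit))
end

section
/- Let M be an n×m real matrix with n ≥ m and MᵀM ≺ I. Then there exist X_M, Y_M ∈ ℝ^{m×m} with X_M invertible and Z_M ∈ ℝ^{(n−m)×m} such that, with N = X_MᵀX_M + Y_M − Y_Mᵀ + Z_MᵀZ_M, one has I + N invertible, the top m×m block of M equals (I − N)(I + N)⁻¹, and the bottom (n−m)×m block equals −2Z_M(I + N)⁻¹. -/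
/-!
Write `M = [M₁; M₂]` and `W = (1 + M₁)⁻¹`, which exists because `M₁ᵀM₁ ≺ 1`. The Cayley transform
of `M₁` is `N = (1 - M₁)W = 2W - 1`, so it suffices to split `2W - 1` as required. Taking
`Y = W` and `Z = -M₂W` leaves `XᵀX = W + Wᵀ - 1 - ZᵀZ`, and expanding shows that this equals
`Wᵀ(1 - MᵀM)W`, which is positive definite, hence of the form `XᵀX` with `X` invertible.
-/

open Matrix

namespace Matrix

theorem transpose_mul_self_fromRows {m₁ m₂ n R : Type*} [Fintype m₁] [Fintype m₂]
    [CommSemiring R] (A₁ : Matrix m₁ n R) (A₂ : Matrix m₂ n R) :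
    (fromRows A₁ A₂)ᵀ * fromRows A₁ A₂ = A₁ᵀ * A₁ + A₂ᵀ * A₂ := by
  rw [transpose_fromRows, fromCols_mul_fromRows]

variable {n : Type*} [Fintype n] [DecidableEq n]

theorem isUnit_one_add_of_posDef_one_sub_transpose_mul_self {A : Matrix n n ℝ}
    (hA : (1 - Aᵀ * A).PosDef) : IsUnit (1 + A) := by
  rw [isUnit_iff_isUnit_det, isUnit_iff_ne_zero]
  intro hdet
  obtain ⟨v, hv0, hv⟩ := exists_mulVec_eq_zero_iff.mpr hdet
  have hAv : A *ᵥ v = -v := eq_neg_of_add_eq_zero_right (by simpa [add_mulVec] using hv)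
  -- `vᵀ(1 - AᵀA)v = ‖v‖² - ‖Av‖²` vanishes when `Av = -v`
  have := hA.dotProduct_mulVec_pos hv0
  simp [sub_mulVec, ← mulVec_mulVec, hAv, dotProduct_mulVec, vecMul_transpose] at this

theorem PosDef.exists_isUnit_transpose_mul_self {P : Matrix n n ℝ} (hP : P.PosDef) :
    ∃ X : Matrix n n ℝ, IsUnit X ∧ Xᵀ * X = P := by
  open scoped MatrixOrder in
  obtain ⟨X, rfl⟩ := CStarAlgebra.nonneg_iff_eq_star_mul_self.mp hP.posSemidef.nonneg
  refine ⟨X, ?_, rfl⟩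
  have := hP.isUnit
  rw [isUnit_iff_isUnit_det, det_mul] at this
  rw [isUnit_iff_isUnit_det]
  exact isUnit_of_mul_isUnit_right this

theorem PosDef.transpose_mul_mul_of_isUnit {P W : Matrix n n ℝ} (hP : P.PosDef) (hW : IsUnit W) :
    (Wᵀ * P * W).PosDef :=
  hP.conjTranspose_mul_mul_same (mulVec_injective_iff_isUnit.mpr hW)

theorem transpose_mul_one_sub_transpose_mul_self_mul {p R : Type*} [Fintype p] [CommRing R]
    {A W : Matrix n n R} (B : Matrix p n R) (hW : (1 + A) * W = 1) :
    Wᵀ * (1 - Aᵀ * A - Bᵀ * B) * W = W + Wᵀ - 1 - (B * W)ᵀ * (B * W) := by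
  have hAW : A * W = 1 - W := by rw [← hW]; noncomm_ring
  calc Wᵀ * (1 - Aᵀ * A - Bᵀ * B) * W
        = Wᵀ * W - (A * W)ᵀ * (A * W) - (B * W)ᵀ * (B * W) := by
        simp only [transpose_mul, Matrix.mul_sub, Matrix.sub_mul, Matrix.mul_assoc, Matrix.mul_one]
    _ = W + Wᵀ - 1 - (B * W)ᵀ * (B * W) := by
        rw [hAW, transpose_sub, transpose_one]; noncomm_ring

theorem fromRows_eq_cayley {p : Type*} {A W N : Matrix n n ℝ} (B : Matrix p n ℝ)
    (hW : (1 + A) * W = 1) (hW' : W * (1 + A) = 1) (hN : N = (2 : ℝ) • W - 1) :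
    IsUnit (1 + N) ∧
      fromRows A B = fromRows ((1 - N) * (1 + N)⁻¹) (-(2 : ℝ) • (-(B * W) * (1 + N)⁻¹)) := by
  have hleft : ((2⁻¹ : ℝ) • (1 + A)) * (1 + N) = 1 := by
    rw [hN, add_sub_cancel, smul_mul_smul_comm, hW]
    norm_num
  rw [inv_eq_left_inv hleft]
  refine ⟨(isUnit_iff_isUnit_det _).mpr (isUnit_det_of_left_inverse hleft), ?_⟩
  congr 1
  · rw [show 1 - N = (2 : ℝ) • (1 - W) by rw [hN]; module, smul_mul_smul_comm, Matrix.sub_mul,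
      hW']
    norm_num
  · rw [Matrix.neg_mul, smul_neg, neg_smul, neg_neg, Matrix.mul_smul, smul_smul,
      Matrix.mul_assoc, hW']
    norm_num

end Matrix

theorem stmt9 {m p : ℕ}
    (M : Matrix (Fin m ⊕ Fin p) (Fin m) ℝ) (hM : (1 - Mᵀ * M).PosDef) :
    ∃ (XM YM : Matrix (Fin m) (Fin m) ℝ) (ZM : Matrix (Fin p) (Fin m) ℝ),
      IsUnit XM ∧
      ∀ N : Matrix (Fin m) (Fin m) ℝ, N = XMᵀ * XM + YM - YMᵀ + ZMᵀ * ZM →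
        IsUnit (1 + N) ∧
        M = Matrix.fromRows ((1 - N) * (1 + N)⁻¹) (-(2 : ℝ) • (ZM * (1 + N)⁻¹)) := by
  obtain ⟨M₁, M₂, rfl⟩ : ∃ M₁ M₂, M = fromRows M₁ M₂ := ⟨_, _, (fromRows_toRows M).symm⟩
  rw [transpose_mul_self_fromRows, ← sub_sub] at hM
  have hM₁ : (1 - M₁ᵀ * M₁).PosDef := by
    simpa only [conjTranspose_eq_transpose_of_trivial, sub_add_cancel] using
      hM.add_posSemidef (posSemidef_conjTranspose_mul_self M₂)
  have hB : IsUnit (1 + M₁).det :=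
    (isUnit_iff_isUnit_det _).mp (isUnit_one_add_of_posDef_one_sub_transpose_mul_self hM₁)
  obtain ⟨W, hW, hW'⟩ : ∃ W, (1 + M₁) * W = 1 ∧ W * (1 + M₁) = 1 :=
    ⟨_, mul_nonsing_inv _ hB, nonsing_inv_mul _ hB⟩
  have hWunit : IsUnit W := (isUnit_iff_isUnit_det W).mpr (isUnit_det_of_left_inverse hW)
  obtain ⟨X, hX, hXP⟩ :=
    (hM.transpose_mul_mul_of_isUnit hWunit).exists_isUnit_transpose_mul_self
  refine ⟨X, W, -(M₂ * W), hX, ?_⟩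
  rintro N rfl
  refine fromRows_eq_cayley M₂ hW hW' ?_
  rw [hXP, transpose_mul_one_sub_transpose_mul_self_mul M₂ hW, transpose_neg, Matrix.neg_mul,
    Matrix.mul_neg, neg_neg]
  module
end

section
/- Let M ∈ ℝ^{1×n} with MMᵀ < 1. Then there exist x ∈ ℝ, x ≠ 0, and z ∈ ℝ^{n−1} such that, setting N = x² + zᵀz (a positive scalar), M equals the transpose of the column vector whose first entry is (1 − N)/(1 + N) and whose remaining n−1 entries are −2z/(1 + N). -/
open Matrix

theorem stmt11 {p : ℕ} (M : Matrix (Fin 1) (Fin 1 ⊕ Fin p) ℝ)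
    (hM : (M * Mᵀ) 0 0 < 1) :
    ∃ (x : ℝ) (z : Fin p → ℝ), x ≠ 0 ∧
      ∀ N : ℝ, N = x ^ 2 + ∑ i, z i ^ 2 →
        M 0 (Sum.inl 0) = (1 - N) / (1 + N) ∧
        ∀ i : Fin p, M 0 (Sum.inr i) = -2 * z i / (1 + N) := by
  set a : ℝ := M 0 (Sum.inl 0) with ha
  set S : ℝ := ∑ i, (M 0 (Sum.inr i)) ^ 2 with hSdef
  have hS : a ^ 2 + S < 1 := by
    have : (M * Mᵀ) 0 0 = a ^ 2 + S := by
      simp [Matrix.mul_apply, Fintype.sum_sum_type, sq, ha, hSdef]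
    linarith [this ▸ hM]
  have hS0 : 0 ≤ S := Finset.sum_nonneg fun i _ => sq_nonneg _
  have ha2 : a ^ 2 < 1 := by linarith
  have ha1 : -1 < a := by nlinarith
  have hC : (0:ℝ) < 1 + a := by linarith
  have hpos : 0 < (1 - a ^ 2 - S) / (1 + a) ^ 2 := div_pos (by nlinarith) (by positivity)
  refine ⟨Real.sqrt ((1 - a ^ 2 - S) / (1 + a) ^ 2),
    fun i => -(M 0 (Sum.inr i)) / (1 + a), ?_, ?_⟩
  · exact ne_of_gt (Real.sqrt_pos.mpr hpos)
  intro N hN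
  have hx2 : Real.sqrt ((1 - a ^ 2 - S) / (1 + a) ^ 2) ^ 2
      = (1 - a ^ 2 - S) / (1 + a) ^ 2 := Real.sq_sqrt hpos.le
  have hzs : (∑ i, (-(M 0 (Sum.inr i)) / (1 + a)) ^ 2) = S / (1 + a) ^ 2 := by
    rw [hSdef, Finset.sum_div]
    exact Finset.sum_congr rfl fun i _ => by field_simp
  have hNval : N = (1 - a) / (1 + a) := by
    rw [hN, hx2, hzs]
    field_simp
    ring
  have h1N : 1 + N = 2 / (1 + a) := by
    rw [hNval]; field_simp; ring
  constructor
  · rw [hNval]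
    field_simp
    ring
  · intro i
    rw [h1N]
    field_simp
end

section
/- Let F be the n×n lower shift matrix and G = e₁. For every W ≻ 0 there exists a unique P ≻ 0 satisfying the discrete algebraic Riccati equation P − FᵀPF + FᵀPG(GᵀPG)⁻¹GᵀPF = W. -/
/-!
For `P ≻ 0` and `g ≠ 0` the column of `G`, the map `Φ := riccatiMap F G W` satisfies
`xᵀ Φ(P) x = xᵀ W x + min_u (F x + u g)ᵀ P (F x + u g)`: it is the Bellman operator of the
system `x ↦ F x + u g` with stage cost `xᵀ W x`. Hence `Φ` is monotone, and since `F` is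
nilpotent the choice `u = 0` bounds every iterate `Φᵏ(W)` by `∑_{t<n} (Fᵗ x)ᵀ W (Fᵗ x)`. The
increasing bounded sequence `Φᵏ(W)` converges, and its limit is a positive definite fixed point.

For uniqueness let `A := closedLoop F G P` be the minimizing feedback of a solution `P`. Then
`P(x) = W(x) + P(A x)`, so `∑ₖ W(Aᵏ x) ≤ P(x)`, while any other solution `R` obeys
`R(x) ≤ W(x) + R(A x)`. With `R ≤ K W` (compactness of the unit sphere) this gives
`R(x) - P(x) ≤ R(Aᵏ x) ≤ K W(Aᵏ x)` for every `k`; summing over `k` yields `R ≤ P`, and by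
symmetry `R = P`.
-/

open Matrix Filter Topology

variable {ι : Type*}

lemma Matrix.PosDef.isSymm {P : Matrix ι ι ℝ} (hP : P.PosDef) : P.IsSymm :=
  isHermitian_iff_isSymm.1 hP.isHermitian

variable [Fintype ι]

section QuadraticForm

variable {P : Matrix ι ι ℝ}

lemma Matrix.IsSymm.dotProduct_mulVec_comm (hP : P.IsSymm) (v w : ι → ℝ) :
    v ⬝ᵥ P *ᵥ w = w ⬝ᵥ P *ᵥ v := by
  rw [dotProduct_mulVec, ← mulVec_transpose, hP.eq, dotProduct_comm]

lemma Matrix.IsSymm.apply_eq_polarization [DecidableEq ι] (hP : P.IsSymm) (i j : ι) :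
    P i j = ((Pi.single i 1 + Pi.single j 1) ⬝ᵥ P *ᵥ (Pi.single i 1 + Pi.single j 1)
      - Pi.single i 1 ⬝ᵥ P *ᵥ Pi.single i 1 - Pi.single j 1 ⬝ᵥ P *ᵥ Pi.single j 1) / 2 := by
  simp only [mulVec_add, dotProduct_add, add_dotProduct, mulVec_single_one, single_one_dotProduct,
    col_apply, hP.apply i j]
  ring

lemma Matrix.IsSymm.ext_dotProduct_mulVec [DecidableEq ι] {R : Matrix ι ι ℝ} (hP : P.IsSymm)
    (hR : R.IsSymm) (h : ∀ x, x ⬝ᵥ P *ᵥ x = x ⬝ᵥ R *ᵥ x) : P = R := by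
  ext i j
  rw [hP.apply_eq_polarization, hR.apply_eq_polarization, h, h, h]

lemma Matrix.IsSymm.add_smul_dotProduct_mulVec_add_smul (hP : P.IsSymm) (v g : ι → ℝ) (u : ℝ) :
    (v + u • g) ⬝ᵥ P *ᵥ (v + u • g) =
      v ⬝ᵥ P *ᵥ v + 2 * u * (g ⬝ᵥ P *ᵥ v) + u ^ 2 * (g ⬝ᵥ P *ᵥ g) := by
  simp only [mulVec_add, mulVec_smul, dotProduct_add, add_dotProduct, dotProduct_smul,
    smul_dotProduct, smul_eq_mul, hP.dotProduct_mulVec_comm v g]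
  ring

lemma Matrix.IsSymm.sub_sq_div_le_add_smul (hP : P.IsSymm) {g : ι → ℝ}
    (hg : 0 < g ⬝ᵥ P *ᵥ g) (v : ι → ℝ) (u : ℝ) :
    v ⬝ᵥ P *ᵥ v - (g ⬝ᵥ P *ᵥ v) ^ 2 / (g ⬝ᵥ P *ᵥ g) ≤ (v + u • g) ⬝ᵥ P *ᵥ (v + u • g) := by
  rw [hP.add_smul_dotProduct_mulVec_add_smul]
  have hsq : 0 ≤ (u * (g ⬝ᵥ P *ᵥ g) + g ⬝ᵥ P *ᵥ v) ^ 2 / (g ⬝ᵥ P *ᵥ g) := by positivity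
  have hexpand : (u * (g ⬝ᵥ P *ᵥ g) + g ⬝ᵥ P *ᵥ v) ^ 2 / (g ⬝ᵥ P *ᵥ g) =
      u ^ 2 * (g ⬝ᵥ P *ᵥ g) + 2 * u * (g ⬝ᵥ P *ᵥ v) + (g ⬝ᵥ P *ᵥ v) ^ 2 / (g ⬝ᵥ P *ᵥ g) := by
    field_simp
    ring
  linarith

lemma Matrix.IsSymm.sub_sq_div_eq_sub_smul (hP : P.IsSymm) {g : ι → ℝ}
    (hg : g ⬝ᵥ P *ᵥ g ≠ 0) (v : ι → ℝ) :
    v ⬝ᵥ P *ᵥ v - (g ⬝ᵥ P *ᵥ v) ^ 2 / (g ⬝ᵥ P *ᵥ g) =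
      (v - (g ⬝ᵥ P *ᵥ v / g ⬝ᵥ P *ᵥ g) • g) ⬝ᵥ P *ᵥ (v - (g ⬝ᵥ P *ᵥ v / g ⬝ᵥ P *ᵥ g) • g) := by
  have h := hP.add_smul_dotProduct_mulVec_add_smul v g (-(g ⬝ᵥ P *ᵥ v / g ⬝ᵥ P *ᵥ g))
  rw [neg_smul, ← sub_eq_add_neg] at h
  rw [h]
  field_simp
  ring

lemma Matrix.PosDef.exists_dotProduct_mulVec_le_mul {W : Matrix ι ι ℝ} (hW : W.PosDef)
    (M : Matrix ι ι ℝ) : ∃ K ≥ 0, ∀ y, y ⬝ᵥ M *ᵥ y ≤ K * (y ⬝ᵥ W *ᵥ y) := by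
  set ratio : (ι → ℝ) → ℝ := fun y => (y ⬝ᵥ M *ᵥ y) / (y ⬝ᵥ W *ᵥ y)
  have hW_pos : ∀ y ≠ 0, 0 < y ⬝ᵥ W *ᵥ y := fun y hy => hW.dotProduct_mulVec_pos hy
  have hcont : ContinuousOn ratio (Metric.sphere 0 1) := by
    refine ContinuousOn.div (by fun_prop) (by fun_prop) fun y hy => (hW_pos y ?_).ne'
    rintro rfl
    simp at hy
  obtain ⟨K, hK⟩ := (isCompact_sphere (0 : ι → ℝ) 1).bddAbove_image hcont
  refine ⟨max K 0, le_max_right _ _, fun y => ?_⟩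
  rcases eq_or_ne y 0 with rfl | hy
  · simp
  have hnorm : 0 < ‖y‖ := norm_pos_iff.2 hy
  have hscale : ratio y = ratio (‖y‖⁻¹ • y) := by
    simp only [ratio, mulVec_smul, dotProduct_smul, smul_dotProduct, smul_eq_mul]
    rw [mul_div_mul_left _ _ (by positivity), mul_div_mul_left _ _ (by positivity)]
  have hunit : ‖y‖⁻¹ • y ∈ Metric.sphere 0 1 := by
    rw [mem_sphere_zero_iff_norm, norm_smul, norm_inv, norm_norm, inv_mul_cancel₀ hnorm.ne']
  have hbound : ratio y ≤ max K 0 := by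
    rw [hscale]
    exact (hK ⟨_, hunit, rfl⟩).trans (le_max_left _ _)
  rwa [div_le_iff₀ (hW_pos y hy)] at hbound

lemma Matrix.exists_tendsto_of_monotone_dotProduct_mulVec [DecidableEq ι] {P : ℕ → Matrix ι ι ℝ}
    (hP : ∀ k, (P k).IsSymm) (hmono : ∀ x, Monotone fun k => x ⬝ᵥ P k *ᵥ x)
    (hbdd : ∀ x, BddAbove (Set.range fun k => x ⬝ᵥ P k *ᵥ x)) :
    ∃ L, Tendsto P atTop (𝓝 L) := by
  choose q hq using fun x => (⟨_, tendsto_atTop_ciSup (hmono x) (hbdd x)⟩ :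
    ∃ l, Tendsto (fun k => x ⬝ᵥ P k *ᵥ x) atTop (𝓝 l))
  refine ⟨of fun i j => (q (Pi.single i 1 + Pi.single j 1) - q (Pi.single i 1)
    - q (Pi.single j 1)) / 2, tendsto_pi_nhds.2 fun i => tendsto_pi_nhds.2 fun j => ?_⟩
  simp_rw [fun k => (hP k).apply_eq_polarization i j]
  exact (((hq _).sub (hq _)).sub (hq _)).div_const 2

end QuadraticForm

noncomputable def riccatiMap (F : Matrix ι ι ℝ) (G : Matrix ι (Fin 1) ℝ) (W P : Matrix ι ι ℝ) :
    Matrix ι ι ℝ :=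
  W + Fᵀ * P * F - ((Gᵀ * P * G) 0 0)⁻¹ • (Fᵀ * P * G * (Gᵀ * P * F))

noncomputable def closedLoop (F : Matrix ι ι ℝ) (G : Matrix ι (Fin 1) ℝ) (P : Matrix ι ι ℝ)
    (x : ι → ℝ) : ι → ℝ :=
  F *ᵥ x - (G.col 0 ⬝ᵥ P *ᵥ (F *ᵥ x) / G.col 0 ⬝ᵥ P *ᵥ G.col 0) • G.col 0

section RiccatiMap

variable {F : Matrix ι ι ℝ} {G : Matrix ι (Fin 1) ℝ} {W P : Matrix ι ι ℝ}

lemma riccatiMap_eq_self_iff :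
    riccatiMap F G W P = P ↔
      P - Fᵀ * P * F + ((Gᵀ * P * G) 0 0)⁻¹ • (Fᵀ * P * G * (Gᵀ * P * F)) = W := by
  rw [riccatiMap]
  constructor <;> intro h
  · nth_rewrite 1 [← h]
    abel
  · rw [← h]
    abel

lemma transpose_mul_mul_apply_zero (G : Matrix ι (Fin 1) ℝ) (P : Matrix ι ι ℝ) :
    (Gᵀ * P * G) 0 0 = G.col 0 ⬝ᵥ P *ᵥ G.col 0 := by
  rw [Matrix.mul_assoc]
  rfl

lemma dotProduct_riccatiMap_mulVec (hP : P.IsSymm) (x : ι → ℝ) :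
    x ⬝ᵥ riccatiMap F G W P *ᵥ x = x ⬝ᵥ W *ᵥ x + (F *ᵥ x) ⬝ᵥ P *ᵥ (F *ᵥ x)
      - (G.col 0 ⬝ᵥ P *ᵥ (F *ᵥ x)) ^ 2 / (G.col 0 ⬝ᵥ P *ᵥ G.col 0) := by
  have hrank : x ⬝ᵥ (Fᵀ * P * G * (Gᵀ * P * F)) *ᵥ x = (G.col 0 ⬝ᵥ P *ᵥ (F *ᵥ x)) ^ 2 := by
    have hsymm : Fᵀ * P * G = (Gᵀ * P * F)ᵀ := by simp [transpose_mul, hP.eq, Matrix.mul_assoc]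
    rw [hsymm, ← mulVec_mulVec, dotProduct_mulVec, vecMul_transpose]
    simp only [dotProduct, Finset.univ_unique, Fin.default_eq_zero, Finset.sum_singleton,
      ← mulVec_mulVec, sq]
    rfl
  have hquad : x ⬝ᵥ (Fᵀ * P * F) *ᵥ x = (F *ᵥ x) ⬝ᵥ P *ᵥ (F *ᵥ x) := by
    rw [← mulVec_mulVec, ← mulVec_mulVec, dotProduct_mulVec x Fᵀ, vecMul_transpose]
  simp only [riccatiMap, sub_mulVec, add_mulVec, smul_mulVec, dotProduct_sub, dotProduct_add,
    dotProduct_smul, smul_eq_mul, hrank, hquad, transpose_mul_mul_apply_zero, div_eq_inv_mul]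

lemma dotProduct_riccatiMap_mulVec_eq_closedLoop (hP : P.IsSymm)
    (hd : G.col 0 ⬝ᵥ P *ᵥ G.col 0 ≠ 0) (x : ι → ℝ) :
    x ⬝ᵥ riccatiMap F G W P *ᵥ x =
      x ⬝ᵥ W *ᵥ x + closedLoop F G P x ⬝ᵥ P *ᵥ closedLoop F G P x := by
  rw [dotProduct_riccatiMap_mulVec hP, add_sub_assoc, hP.sub_sq_div_eq_sub_smul hd, closedLoop]

lemma dotProduct_riccatiMap_mulVec_le (hP : P.IsSymm) (hd : 0 < G.col 0 ⬝ᵥ P *ᵥ G.col 0)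
    (x : ι → ℝ) (u : ℝ) :
    x ⬝ᵥ riccatiMap F G W P *ᵥ x ≤
      x ⬝ᵥ W *ᵥ x + (F *ᵥ x + u • G.col 0) ⬝ᵥ P *ᵥ (F *ᵥ x + u • G.col 0) := by
  rw [dotProduct_riccatiMap_mulVec hP, add_sub_assoc]
  gcongr
  exact hP.sub_sq_div_le_add_smul hd _ u

end RiccatiMap

section Existence

variable {F : Matrix ι ι ℝ} {G : Matrix ι (Fin 1) ℝ} {W P P' : Matrix ι ι ℝ}

lemma riccatiMap_isSymm (hW : W.IsSymm) (hP : P.IsSymm) : (riccatiMap F G W P).IsSymm := by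
  simp only [IsSymm, riccatiMap, transpose_sub, transpose_add, transpose_smul, transpose_mul,
    transpose_transpose, hW.eq, hP.eq, Matrix.mul_assoc]

variable (hg : G.col 0 ≠ 0)
include hg

lemma dotProduct_le_dotProduct_riccatiMap (hP : P.PosDef) (x : ι → ℝ) :
    x ⬝ᵥ W *ᵥ x ≤ x ⬝ᵥ riccatiMap F G W P *ᵥ x := by
  rw [dotProduct_riccatiMap_mulVec_eq_closedLoop hP.isSymm (hP.dotProduct_mulVec_pos hg).ne']
  exact le_add_of_nonneg_right (hP.posSemidef.dotProduct_mulVec_nonneg _)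

lemma posDef_riccatiMap (hW : W.PosDef) (hP : P.PosDef) : (riccatiMap F G W P).PosDef :=
  .of_dotProduct_mulVec_pos (isHermitian_iff_isSymm.2 (riccatiMap_isSymm hW.isSymm hP.isSymm))
    fun x hx => (hW.dotProduct_mulVec_pos hx).trans_le (dotProduct_le_dotProduct_riccatiMap hg hP x)

lemma dotProduct_riccatiMap_mono (hP : P.PosDef) (hP' : P'.PosDef)
    (hle : ∀ z, z ⬝ᵥ P *ᵥ z ≤ z ⬝ᵥ P' *ᵥ z) (x : ι → ℝ) :
    x ⬝ᵥ riccatiMap F G W P *ᵥ x ≤ x ⬝ᵥ riccatiMap F G W P' *ᵥ x := by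
  rw [dotProduct_riccatiMap_mulVec_eq_closedLoop hP'.isSymm (hP'.dotProduct_mulVec_pos hg).ne',
    closedLoop, sub_eq_add_neg, ← neg_smul]
  grw [dotProduct_riccatiMap_mulVec_le hP.isSymm (hP.dotProduct_mulVec_pos hg), hle]

lemma dotProduct_riccatiMap_le (hP : P.PosDef) (x : ι → ℝ) :
    x ⬝ᵥ riccatiMap F G W P *ᵥ x ≤ x ⬝ᵥ W *ᵥ x + (F *ᵥ x) ⬝ᵥ P *ᵥ (F *ᵥ x) := by
  simpa using dotProduct_riccatiMap_mulVec_le (W := W) hP.isSymm (hP.dotProduct_mulVec_pos hg) x 0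

variable (hW : W.PosDef)
include hW

lemma posDef_iterate_riccatiMap (k : ℕ) : ((riccatiMap F G W)^[k] W).PosDef := by
  induction k with
  | zero => exact hW
  | succ k ih => exact Function.iterate_succ_apply' _ _ _ ▸ posDef_riccatiMap hg hW ih

lemma monotone_dotProduct_iterate_riccatiMap (x : ι → ℝ) :
    Monotone fun k => x ⬝ᵥ (riccatiMap F G W)^[k] W *ᵥ x := by
  suffices h : ∀ k x, x ⬝ᵥ (riccatiMap F G W)^[k] W *ᵥ x ≤
      x ⬝ᵥ (riccatiMap F G W)^[k + 1] W *ᵥ x from monotone_nat_of_le_succ fun k => h k x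
  intro k
  induction k with
  | zero => exact dotProduct_le_dotProduct_riccatiMap hg hW
  | succ k ih =>
    intro x
    simpa only [Function.iterate_succ_apply'] using dotProduct_riccatiMap_mono (F := F) hg
      (posDef_iterate_riccatiMap hg hW k) (posDef_iterate_riccatiMap hg hW (k + 1)) ih x

lemma dotProduct_iterate_riccatiMap_le_sum [DecidableEq ι] {m : ℕ} (hF : F ^ m = 0) (k : ℕ)
    (x : ι → ℝ) :
    x ⬝ᵥ (riccatiMap F G W)^[k] W *ᵥ x ≤
      ∑ t ∈ Finset.range m, (F ^ t *ᵥ x) ⬝ᵥ W *ᵥ (F ^ t *ᵥ x) := by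
  have hshift : ∀ x, ∑ t ∈ Finset.range m, (F ^ t *ᵥ x) ⬝ᵥ W *ᵥ (F ^ t *ᵥ x) =
      x ⬝ᵥ W *ᵥ x + ∑ t ∈ Finset.range m, (F ^ t *ᵥ (F *ᵥ x)) ⬝ᵥ W *ᵥ (F ^ t *ᵥ (F *ᵥ x)) := by
    intro x
    have h := Finset.sum_range_succ' (fun t => (F ^ t *ᵥ x) ⬝ᵥ W *ᵥ (F ^ t *ᵥ x)) m
    simp only [Finset.sum_range_succ, hF, zero_mulVec, mulVec_zero, dotProduct_zero, add_zero,
      pow_succ, ← mulVec_mulVec, pow_zero, one_mulVec] at h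
    rw [h, add_comm]
  have hnonneg : ∀ x, 0 ≤ ∑ t ∈ Finset.range m, (F ^ t *ᵥ x) ⬝ᵥ W *ᵥ (F ^ t *ᵥ x) := fun x =>
    Finset.sum_nonneg fun t _ => hW.posSemidef.dotProduct_mulVec_nonneg _
  induction k generalizing x with
  | zero => exact (hshift x).symm ▸ le_add_of_nonneg_right (hnonneg _)
  | succ k ih =>
    rw [Function.iterate_succ_apply', hshift]
    grw [dotProduct_riccatiMap_le hg (posDef_iterate_riccatiMap hg hW k), ih]

end Existence

lemma exists_posDef_riccatiMap_eq [DecidableEq ι] {F : Matrix ι ι ℝ} {G : Matrix ι (Fin 1) ℝ}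
    {W : Matrix ι ι ℝ} (hg : G.col 0 ≠ 0) (hW : W.PosDef) (hF : IsNilpotent F) :
    ∃ P, P.PosDef ∧ riccatiMap F G W P = P := by
  obtain ⟨m, hm⟩ := hF
  obtain ⟨L, hL⟩ := exists_tendsto_of_monotone_dotProduct_mulVec
    (fun k => (posDef_iterate_riccatiMap hg hW k).isSymm)
    (monotone_dotProduct_iterate_riccatiMap hg hW)
    fun x => ⟨_, Set.forall_mem_range.2 fun k => dotProduct_iterate_riccatiMap_le_sum hg hW hm k x⟩
  have hLsymm : L.IsSymm := tendsto_nhds_unique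
    ((continuous_id.matrix_transpose.tendsto L).comp hL)
    ((tendsto_congr fun k => (posDef_iterate_riccatiMap hg hW k).isSymm.eq.symm).1 hL)
  have hLW : ∀ x, x ⬝ᵥ W *ᵥ x ≤ x ⬝ᵥ L *ᵥ x := fun x =>
    have hquad : Continuous fun M : Matrix ι ι ℝ => x ⬝ᵥ M *ᵥ x := by fun_prop
    ge_of_tendsto' ((hquad.tendsto L).comp hL)
      fun k => monotone_dotProduct_iterate_riccatiMap hg hW x (Nat.zero_le k)
  have hLpos : L.PosDef := .of_dotProduct_mulVec_pos (isHermitian_iff_isSymm.2 hLsymm)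
    fun x hx => (hW.dotProduct_mulVec_pos hx).trans_le (hLW x)
  have hd : (Gᵀ * L * G) 0 0 ≠ 0 := by
    rw [transpose_mul_mul_apply_zero]
    exact (hLpos.dotProduct_mulVec_pos hg).ne'
  have hcont : ContinuousAt (riccatiMap F G W) L := by
    unfold riccatiMap
    fun_prop (disch := exact hd)
  refine ⟨L, hLpos, tendsto_nhds_unique (hcont.tendsto.comp hL) ?_⟩
  simpa [Function.comp_def, ← Function.iterate_succ_apply' (riccatiMap F G W)] using
    (tendsto_add_atTop_iff_nat 1).2 hL

section Uniqueness

variable {F : Matrix ι ι ℝ} {G : Matrix ι (Fin 1) ℝ} {W P R : Matrix ι ι ℝ}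
  (hg : G.col 0 ≠ 0) (hP : P.PosDef) (hPfix : riccatiMap F G W P = P)
include hg hP hPfix

lemma dotProduct_mulVec_eq_add_closedLoop (x : ι → ℝ) :
    x ⬝ᵥ P *ᵥ x = x ⬝ᵥ W *ᵥ x + closedLoop F G P x ⬝ᵥ P *ᵥ closedLoop F G P x := by
  conv_lhs => rw [← hPfix]
  exact dotProduct_riccatiMap_mulVec_eq_closedLoop hP.isSymm (hP.dotProduct_mulVec_pos hg).ne' x

lemma sum_dotProduct_iterate_closedLoop_le (m : ℕ) (x : ι → ℝ) :
    ∑ k ∈ Finset.range m, (closedLoop F G P)^[k] x ⬝ᵥ W *ᵥ (closedLoop F G P)^[k] x ≤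
      x ⬝ᵥ P *ᵥ x := by
  induction m generalizing x with
  | zero => exact hP.posSemidef.dotProduct_mulVec_nonneg x
  | succ m ih =>
    rw [Finset.sum_range_succ', dotProduct_mulVec_eq_add_closedLoop hg hP hPfix x]
    simp only [Function.iterate_succ_apply, Function.iterate_zero_apply]
    grw [ih]
    rw [add_comm]

/-- Along the closed loop of `P`, a second solution `R` can only gain on `P`: `R` may steer
with `P`'s feedback, which is suboptimal for `R`. -/
lemma sub_le_sub_iterate_closedLoop (hR : R.PosDef) (hRfix : riccatiMap F G W R = R)
    (k : ℕ) (x : ι → ℝ) :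
    x ⬝ᵥ R *ᵥ x - x ⬝ᵥ P *ᵥ x ≤
      (closedLoop F G P)^[k] x ⬝ᵥ R *ᵥ (closedLoop F G P)^[k] x -
        (closedLoop F G P)^[k] x ⬝ᵥ P *ᵥ (closedLoop F G P)^[k] x := by
  induction k generalizing x with
  | zero => rfl
  | succ k ih =>
    refine le_trans ?_ (ih (closedLoop F G P x))
    have hR_le : x ⬝ᵥ R *ᵥ x ≤ x ⬝ᵥ W *ᵥ x + closedLoop F G P x ⬝ᵥ R *ᵥ closedLoop F G P x := by
      conv_lhs => rw [← hRfix]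
      rw [closedLoop, sub_eq_add_neg, ← neg_smul]
      exact dotProduct_riccatiMap_mulVec_le hR.isSymm (hR.dotProduct_mulVec_pos hg) x _
    linarith [dotProduct_mulVec_eq_add_closedLoop hg hP hPfix x]

lemma dotProduct_mulVec_le_of_riccatiMap_eq (hW : W.PosDef) (hR : R.PosDef)
    (hRfix : riccatiMap F G W R = R) (x : ι → ℝ) : x ⬝ᵥ R *ᵥ x ≤ x ⬝ᵥ P *ᵥ x := by
  obtain ⟨K, hK0, hK⟩ := hW.exists_dotProduct_mulVec_le_mul R
  have hmul : ∀ m : ℕ, m * (x ⬝ᵥ R *ᵥ x - x ⬝ᵥ P *ᵥ x) ≤ K * (x ⬝ᵥ P *ᵥ x) := by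
    intro m
    calc m * (x ⬝ᵥ R *ᵥ x - x ⬝ᵥ P *ᵥ x)
        = ∑ k ∈ Finset.range m, (x ⬝ᵥ R *ᵥ x - x ⬝ᵥ P *ᵥ x) := by
          rw [Finset.sum_const, Finset.card_range, nsmul_eq_mul]
      _ ≤ ∑ k ∈ Finset.range m,
            K * ((closedLoop F G P)^[k] x ⬝ᵥ W *ᵥ (closedLoop F G P)^[k] x) := by
        gcongr with k
        exact (sub_le_sub_iterate_closedLoop hg hP hPfix hR hRfix k x).trans
          ((sub_le_self _ (hP.posSemidef.dotProduct_mulVec_nonneg _)).trans (hK _))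
      _ ≤ K * (x ⬝ᵥ P *ᵥ x) := by
        rw [← Finset.mul_sum]
        exact mul_le_mul_of_nonneg_left (sum_dotProduct_iterate_closedLoop_le hg hP hPfix m x) hK0
  by_contra! hlt
  obtain ⟨m, hm⟩ := exists_nat_gt (K * (x ⬝ᵥ P *ᵥ x) / (x ⬝ᵥ R *ᵥ x - x ⬝ᵥ P *ᵥ x))
  rw [div_lt_iff₀ (sub_pos.2 hlt)] at hm
  linarith [hmul m]

end Uniqueness

lemma eq_of_riccatiMap_eq [DecidableEq ι] {F : Matrix ι ι ℝ} {G : Matrix ι (Fin 1) ℝ}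
    {W P R : Matrix ι ι ℝ} (hg : G.col 0 ≠ 0) (hW : W.PosDef) (hP : P.PosDef)
    (hPfix : riccatiMap F G W P = P) (hR : R.PosDef) (hRfix : riccatiMap F G W R = R) : R = P :=
  hR.isSymm.ext_dotProduct_mulVec hP.isSymm fun x => le_antisymm
    (dotProduct_mulVec_le_of_riccatiMap_eq hg hP hPfix hW hR hRfix x)
    (dotProduct_mulVec_le_of_riccatiMap_eq hg hR hRfix hW hP hPfix x)

lemma pow_apply_of_shift {n : ℕ} {F : Matrix (Fin n) (Fin n) ℝ}
    (hF : ∀ i j : Fin n, F i j = if (i : ℕ) = (j : ℕ) + 1 then 1 else 0) (k : ℕ) (i j : Fin n) :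
    (F ^ k) i j = if (i : ℕ) = (j : ℕ) + k then 1 else 0 := by
  induction k generalizing j with
  | zero => simp [one_apply, Fin.ext_iff]
  | succ k ih =>
    rw [pow_succ, mul_apply]
    simp only [ih, hF, ite_mul, one_mul, zero_mul, ← ite_and]
    rw [Fin.sum_univ_eq_sum_range (fun l => if (i : ℕ) = l + k ∧ l = j + 1 then (1 : ℝ) else 0)]
    simp only [and_comm (a := (i : ℕ) = _), ite_and, Finset.sum_ite_eq', Finset.mem_range]
    split_ifs <;> first | rfl | (exfalso; omega)

lemma isNilpotent_of_shift {n : ℕ} {F : Matrix (Fin n) (Fin n) ℝ}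
    (hF : ∀ i j : Fin n, F i j = if (i : ℕ) = (j : ℕ) + 1 then 1 else 0) : IsNilpotent F :=
  ⟨n, by ext i j; simp [pow_apply_of_shift hF]; omega⟩

theorem stmt13 {n : ℕ} (hn : 0 < n)
    (F : Matrix (Fin n) (Fin n) ℝ)
    (hF : ∀ i j : Fin n, F i j = if (i : ℕ) = (j : ℕ) + 1 then 1 else 0)
    (G : Matrix (Fin n) (Fin 1) ℝ)
    (hG : ∀ i : Fin n, G i 0 = if (i : ℕ) = 0 then 1 else 0)
    (W : Matrix (Fin n) (Fin n) ℝ) (hW : W.PosDef) :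
    ∃! P : Matrix (Fin n) (Fin n) ℝ, P.PosDef ∧
      P - Fᵀ * P * F + ((Gᵀ * P * G) 0 0)⁻¹ • (Fᵀ * P * G * (Gᵀ * P * F)) = W := by
  have hg : G.col 0 ≠ 0 := fun h => by simpa [hG] using congrFun h ⟨0, hn⟩
  obtain ⟨P, hP, hPfix⟩ := exists_posDef_riccatiMap_eq hg hW (isNilpotent_of_shift hF)
  refine ⟨P, ⟨hP, riccatiMap_eq_self_iff.1 hPfix⟩, fun R ⟨hR, hReq⟩ => ?_⟩
  exact eq_of_riccatiMap_eq hg hW hP hPfix hR (riccatiMap_eq_self_iff.2 hReq)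
end

section
/- Let P ≻ 0 be n×n, F the n×n lower shift matrix, G = e₁, W = P − FᵀPF + FᵀPG(GᵀPG)⁻¹GᵀPF, and suppose W ≻ 0. Factor W = X_WᵀX_W and GᵀPG = x_Q² with X_W invertible and x_Q > 0. For any row vector M ∈ ℝ^{1×n} with MᵀM ≺ I, the matrix K = (GᵀPG)⁻¹GᵀPF + x_Q⁻¹ M X_W satisfies P − (F − GK)ᵀP(F − GK) = X_Wᵀ(I − MᵀM)X_W ≻ 0. -/
/-!
Write `A = GᵀPF` and `B = M X_W`. Since `GᵀPG = q` is a positive scalar and `P` is symmetric,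
expanding `(F - GK)ᵀP(F - GK)` and completing the square in `K = q⁻¹A + x_Q⁻¹B` gives
`P - (F - GK)ᵀP(F - GK) = (P - FᵀPF + q⁻¹AᵀA) - BᵀB = W - X_WᵀMᵀMX_W = X_Wᵀ(1 - MᵀM)X_W`,
which is positive definite as a congruence of `1 - MᵀM` by the invertible `X_W`.
-/

open Matrix

namespace Matrix

variable {n m : Type*} [Fintype n] [Fintype m]

lemma transpose_sub_mul_mul_sub {P F : Matrix n n ℝ} (hP : Pᵀ = P) (G : Matrix n m ℝ)
    (K : Matrix m n ℝ) :
    (F - G * K)ᵀ * P * (F - G * K) =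
      Fᵀ * P * F - (Gᵀ * P * F)ᵀ * K - Kᵀ * (Gᵀ * P * F) + Kᵀ * (Gᵀ * P * G) * K := by
  simp only [transpose_sub, transpose_mul, transpose_transpose, hP, Matrix.sub_mul,
    Matrix.mul_sub, Matrix.mul_assoc]
  abel

lemma sub_transpose_sub_mul_mul_sub_of_scalar [DecidableEq m] {P F : Matrix n n ℝ}
    (hP : Pᵀ = P) {G : Matrix n m ℝ} {xQ : ℝ} (hxQ : xQ ≠ 0)
    (hG : Gᵀ * P * G = xQ ^ 2 • (1 : Matrix m m ℝ)) (B : Matrix m n ℝ) :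
    P - (F - G * ((xQ ^ 2)⁻¹ • (Gᵀ * P * F) + xQ⁻¹ • B))ᵀ * P *
        (F - G * ((xQ ^ 2)⁻¹ • (Gᵀ * P * F) + xQ⁻¹ • B)) =
      P - Fᵀ * P * F + (xQ ^ 2)⁻¹ • ((Gᵀ * P * F)ᵀ * (Gᵀ * P * F)) - Bᵀ * B := by
  rw [transpose_sub_mul_mul_sub hP, hG]
  simp only [transpose_add, transpose_smul, Matrix.add_mul, Matrix.mul_add, Matrix.smul_mul,
    Matrix.mul_smul, Matrix.mul_one, smul_smul, smul_add]
  match_scalars <;> field_simp <;> ring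

end Matrix

theorem stmt14_general {n : ℕ}
    (F : Matrix (Fin n) (Fin n) ℝ)
    (G : Matrix (Fin n) (Fin 1) ℝ)
    (P : Matrix (Fin n) (Fin n) ℝ) (hP : P.PosDef)
    (q : ℝ) (hq : q = (Gᵀ * P * G) 0 0)
    (W : Matrix (Fin n) (Fin n) ℝ)
    (hWdef : W = P - Fᵀ * P * F + q⁻¹ • (Fᵀ * P * G * (Gᵀ * P * F)))
    (XW : Matrix (Fin n) (Fin n) ℝ) (hXW : IsUnit XW) (hWfac : W = XWᵀ * XW)
    (xQ : ℝ) (hxQ : 0 < xQ) (hxQsq : q = xQ ^ 2)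
    (M : Matrix (Fin 1) (Fin n) ℝ) (hMnorm : (1 - Mᵀ * M).PosDef)
    (K : Matrix (Fin 1) (Fin n) ℝ)
    (hK : K = q⁻¹ • (Gᵀ * P * F) + xQ⁻¹ • (M * XW)) :
    P - (F - G * K)ᵀ * P * (F - G * K) = XWᵀ * (1 - Mᵀ * M) * XW ∧
      (P - (F - G * K)ᵀ * P * (F - G * K)).PosDef := by
  have hPsymm : Pᵀ = P := by simpa [conjTranspose_eq_transpose_of_trivial] using hP.1.eq
  have hPG : Gᵀ * P * G = xQ ^ 2 • (1 : Matrix (Fin 1) (Fin 1) ℝ) := by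
    ext i j
    fin_cases i; fin_cases j
    simp [← hxQsq, hq]
  have hFPG : Fᵀ * P * G = (Gᵀ * P * F)ᵀ := by
    simp only [transpose_mul, transpose_transpose, hPsymm, Matrix.mul_assoc]
  have hclosed : P - (F - G * K)ᵀ * P * (F - G * K) = XWᵀ * (1 - Mᵀ * M) * XW := by
    rw [hK, hxQsq, sub_transpose_sub_mul_mul_sub_of_scalar hPsymm hxQ.ne' hPG, ← hFPG,
      ← hxQsq, ← hWdef, hWfac]
    simp only [Matrix.mul_sub, Matrix.sub_mul, Matrix.mul_one, transpose_mul, Matrix.mul_assoc]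
  refine ⟨hclosed, hclosed ▸ ?_⟩
  simpa [star_eq_conjTranspose, conjTranspose_eq_transpose_of_trivial] using
    (Matrix.IsUnit.posDef_star_left_conjugate_iff hXW).2 hMnorm

theorem stmt14 {n : ℕ} (hn : 0 < n)
    (F : Matrix (Fin n) (Fin n) ℝ)
    (hF : ∀ i j : Fin n, F i j = if (i : ℕ) = (j : ℕ) + 1 then 1 else 0)
    (G : Matrix (Fin n) (Fin 1) ℝ)
    (hG : ∀ i : Fin n, G i 0 = if (i : ℕ) = 0 then 1 else 0)
    (P : Matrix (Fin n) (Fin n) ℝ) (hP : P.PosDef)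
    (q : ℝ) (hq : q = (Gᵀ * P * G) 0 0)
    (W : Matrix (Fin n) (Fin n) ℝ)
    (hWdef : W = P - Fᵀ * P * F + q⁻¹ • (Fᵀ * P * G * (Gᵀ * P * F)))
    (hWpd : W.PosDef)
    (XW : Matrix (Fin n) (Fin n) ℝ) (hXW : IsUnit XW) (hWfac : W = XWᵀ * XW)
    (xQ : ℝ) (hxQ : 0 < xQ) (hxQsq : q = xQ ^ 2)
    (M : Matrix (Fin 1) (Fin n) ℝ) (hMnorm : (1 - Mᵀ * M).PosDef)
    (K : Matrix (Fin 1) (Fin n) ℝ)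
    (hK : K = q⁻¹ • (Gᵀ * P * F) + xQ⁻¹ • (M * XW)) :
    P - (F - G * K)ᵀ * P * (F - G * K) = XWᵀ * (1 - Mᵀ * M) * XW ∧
      (P - (F - G * K)ᵀ * P * (F - G * K)).PosDef :=
  stmt14_general F G P hP q hq W hWdef XW hXW hWfac xQ hxQ hxQsq M hMnorm K hK
end
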